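/- Let J be a diagram and (M_w, M_z) the pair of isometries defined by J on H_J. Then the defect operator C(M_w,M_z) = I − M_wM_w* − M_zM_z* + M_wM_zM_z*M_w* equals P_outer − P_inner, where P_outer is the orthogonal projection onto the closed span of {e_p : p ∈ J_outer} and P_inner is the orthogonal projection onto the closed span of {e_p : p ∈ J_inner}. -/

import Mathlib

open scoped ENNReal ComplexConjugate InnerProductSpace
open Filter

noncomputable section

namespace TaylorDiagram

/-- A diagram: a subset of ℤ² closed under adding ℕ². -/
def IsDiagram (J : Set (ℤ × ℤ)) : Prop :=
  ∀ p ∈ J, ∀ k l : ℕ, (p.1 + (k : ℤ), p.2 + (l : ℤ)) ∈ J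

/-- Translate of a set of ℤ² by a vector. -/
def tr (v : ℤ × ℤ) (J : Set (ℤ × ℤ)) : Set (ℤ × ℤ) :=
  (fun p => (v.1 + p.1, v.2 + p.2)) '' J

def Equivalent (J₁ J₂ : Set (ℤ × ℤ)) : Prop := ∃ v : ℤ × ℤ, J₁ = tr v J₂

/-- Simple diagrams: translation equivalent to ℤ², ℤ₊², ℤ₊×ℤ or ℤ×ℤ₊. -/
def Simple (J : Set (ℤ × ℤ)) : Prop :=
  Equivalent J Set.univ ∨ Equivalent J {p | 0 < p.1 ∧ 0 < p.2} ∨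
    Equivalent J {p | 0 < p.1} ∨ Equivalent J {p | 0 < p.2}

/-- The Hilbert space ℓ²(J). -/
abbrev HJ (J : Set (ℤ × ℤ)) : Type := lp (fun _ : J => ℂ) 2

/-- Canonical orthonormal basis vectors of ℓ²(J). -/
def e (J : Set (ℤ × ℤ)) (p : J) : HJ J := lp.single 2 p 1

/-- `Mw` is the horizontal shift on ℓ²(J). -/
def IsShiftW (J : Set (ℤ × ℤ)) (Mw : HJ J →L[ℂ] HJ J) : Prop :=
  ∀ (p : ℤ × ℤ) (hp : p ∈ J) (hp' : (p.1 + 1, p.2) ∈ J),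
    Mw (e J ⟨p, hp⟩) = e J ⟨(p.1 + 1, p.2), hp'⟩

/-- `Mz` is the vertical shift on ℓ²(J). -/
def IsShiftZ (J : Set (ℤ × ℤ)) (Mz : HJ J →L[ℂ] HJ J) : Prop :=
  ∀ (p : ℤ × ℤ) (hp : p ∈ J) (hp' : (p.1, p.2 + 1) ∈ J),
    Mz (e J ⟨p, hp⟩) = e J ⟨(p.1, p.2 + 1), hp'⟩

section Conditions

variable {H : Type*} [NormedAddCommGroup H] [InnerProductSpace ℂ H]

/-- Condition (T1) of exactness of the Koszul complex. -/
def CondT1 (A B : H →L[ℂ] H) : Prop :=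
  LinearMap.ker (A : H →ₗ[ℂ] H) ⊓ LinearMap.ker (B : H →ₗ[ℂ] H) = ⊥

/-- Condition (T2) of exactness of the Koszul complex. -/
def CondT2 (A B : H →L[ℂ] H) : Prop :=
  ∀ h₁ h₂ : H, A h₂ = B h₁ → ∃ h : H, h₁ = A h ∧ h₂ = B h

/-- Condition (T3) of exactness of the Koszul complex. -/
def CondT3 (A B : H →L[ℂ] H) : Prop :=
  LinearMap.range (A : H →ₗ[ℂ] H) ⊔ LinearMap.range (B : H →ₗ[ℂ] H) = ⊤

/-- Exactness of the (short) Koszul complex of a pair. -/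
def KoszulExact (A B : H →L[ℂ] H) : Prop :=
  CondT1 A B ∧ CondT2 A B ∧ CondT3 A B

/-- The Taylor spectrum of a commuting pair. -/
def taylorSpectrum (A B : H →L[ℂ] H) : Set (ℂ × ℂ) :=
  {p | ¬ KoszulExact (p.1 • (1 : H →L[ℂ] H) - A) (p.2 • (1 : H →L[ℂ] H) - B)}

/-- Γ₂: the set of points where (T2) fails. -/
def Gamma2 (A B : H →L[ℂ] H) : Set (ℂ × ℂ) :=
  {p | ¬ CondT2 (p.1 • (1 : H →L[ℂ] H) - A) (p.2 • (1 : H →L[ℂ] H) - B)}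

/-- Γ₃: the set of points where (T3) fails. -/
def Gamma3 (A B : H →L[ℂ] H) : Set (ℂ × ℂ) :=
  {p | ¬ CondT3 (p.1 • (1 : H →L[ℂ] H) - A) (p.2 • (1 : H →L[ℂ] H) - B)}

end Conditions

/-- Vertical border of a diagram. -/
def JVB (J : Set (ℤ × ℤ)) : Set (ℤ × ℤ) := {p | p ∈ J ∧ (p.1 - 1, p.2) ∉ J}

/-- Horizontal border of a diagram. -/
def JHB (J : Set (ℤ × ℤ)) : Set (ℤ × ℤ) := {p | p ∈ J ∧ (p.1, p.2 - 1) ∉ J}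

/-- Outer corners of a diagram. -/
def Jouter (J : Set (ℤ × ℤ)) : Set (ℤ × ℤ) := JHB J ∩ JVB J

/-- Inner corners of a diagram. -/
def Jinner (J : Set (ℤ × ℤ)) : Set (ℤ × ℤ) :=
  {p | p ∈ J ∧ (p.1 - 1, p.2) ∈ J ∧ (p.1, p.2 - 1) ∈ J ∧ (p.1 - 1, p.2 - 1) ∉ J}

/-- Border of a diagram. -/
def Jborder (J : Set (ℤ × ℤ)) : Set (ℤ × ℤ) := JHB J ∪ JVB J ∪ Jinner J

/-- The basis vectors of `ℓ²(J)` indexed by a subset `S` of `ℤ²`. -/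
def basisVecs (J : Set (ℤ × ℤ)) (S : Set (ℤ × ℤ)) : Set (HJ J) :=
  e J '' {p : J | (p : ℤ × ℤ) ∈ S}

/-!
Every term of the defect operator is diagonal in the basis `e_q`: `M_w M_w*`, `M_z M_z*` and
`(M_w M_z)(M_w M_z)*` are the shifts by `v = (1,0), (0,1), (1,1)` composed with their adjoints,
and such a product fixes `e_q` when `q - v ∈ J` and kills it otherwise. Likewise `P_outer` and
`P_inner` multiply `e_q` by the indicator of `J_outer`, `J_inner`. The theorem thus reduces to
the identity `1 - [q-(1,0) ∈ J] - [q-(0,1) ∈ J] + [q-(1,1) ∈ J] = [q ∈ J_outer] - [q ∈ J_inner]`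
for `q ∈ J`, a case split once one notes that `q - (1,1) ∈ J` forces `q - (1,0), q - (0,1) ∈ J`.
-/

section Basis

variable {J : Set (ℤ × ℤ)}

theorem inner_e_left (p : J) (f : HJ J) : ⟪e J p, f⟫_ℂ = f p := by
  classical
  simp [e, lp.inner_single_left]

theorem inner_e_e (p q : J) : ⟪e J p, e J q⟫_ℂ = if p = q then 1 else 0 := by
  classical
  rw [inner_e_left, e, lp.single_apply, Pi.single_apply, eq_comm]

theorem ext_inner_e {f g : HJ J} (h : ∀ p : J, ⟪e J p, f⟫_ℂ = ⟪e J p, g⟫_ℂ) : f = g :=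
  lp.ext <| funext fun p => by simpa only [inner_e_left] using h p

theorem e_congr {p q : ℤ × ℤ} (h : p = q) (hp : p ∈ J) (hq : q ∈ J) :
    e J ⟨p, hp⟩ = e J ⟨q, hq⟩ := by
  subst h; rfl

theorem continuousLinearMap_ext_e {F : Type*} [AddCommMonoid F] [Module ℂ F] [TopologicalSpace F]
    [T2Space F] {f g : HJ J →L[ℂ] F} (h : ∀ p : J, f (e J p) = g (e J p)) : f = g :=
  lp.ext_continuousLinearMap ENNReal.ofNat_ne_top fun p => ContinuousLinearMap.ext_ring (h p)

end Basis

theorem eq_starProjection_of_forall {E : Type*} [NormedAddCommGroup E] [InnerProductSpace ℂ E]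
    {K : Submodule ℂ E} [K.HasOrthogonalProjection] {P : E →L[ℂ] E}
    (hP : ∀ x, P x ∈ K ∧ x - P x ∈ Kᗮ) : P = K.starProjection :=
  ContinuousLinearMap.ext fun x => (K.eq_starProjection_of_mem_orthogonal (hP x).1 (hP x).2).symm

theorem starProjection_closure_span_basisVecs_e {J : Set (ℤ × ℤ)} (S : Set (ℤ × ℤ)) (q : J) :
    (Submodule.span ℂ (basisVecs J S)).topologicalClosure.starProjection (e J q) =
      S.indicator (1 : ℤ × ℤ → ℂ) q • e J q := by
  by_cases hq : (q : ℤ × ℤ) ∈ S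
  · rw [Set.indicator_of_mem hq, Pi.one_apply, one_smul, Submodule.starProjection_eq_self_iff]
    exact Submodule.le_topologicalClosure _ (Submodule.subset_span ⟨q, hq, rfl⟩)
  · rw [Set.indicator_of_notMem hq, zero_smul, Submodule.starProjection_apply_eq_zero_iff,
      Submodule.orthogonal_closure]
    have hortho : Submodule.span ℂ (basisVecs J S) ⟂ Submodule.span ℂ {e J q} := by
      rw [Submodule.isOrtho_span]
      rintro _ ⟨p, hp, rfl⟩ _ rfl
      rw [inner_e_e, if_neg (by rintro rfl; exact hq hp)]
    exact hortho.symm (Submodule.mem_span_singleton_self _)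

theorem IsDiagram.add_mem {J : Set (ℤ × ℤ)} (hJ : IsDiagram J) {p v : ℤ × ℤ} (hp : p ∈ J)
    (hv : 0 ≤ v) : p + v ∈ J := by
  obtain ⟨k, hk⟩ := Int.eq_ofNat_of_zero_le hv.1
  obtain ⟨l, hl⟩ := Int.eq_ofNat_of_zero_le hv.2
  have := hJ p hp k l
  rwa [← hk, ← hl] at this

def IsShiftBy (J : Set (ℤ × ℤ)) (v : ℤ × ℤ) (T : HJ J →L[ℂ] HJ J) : Prop :=
  ∀ (p : ℤ × ℤ) (hp : p ∈ J) (hp' : p + v ∈ J), T (e J ⟨p, hp⟩) = e J ⟨p + v, hp'⟩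

namespace IsShiftBy

variable {J : Set (ℤ × ℤ)} {v w : ℤ × ℤ} {S T : HJ J →L[ℂ] HJ J}

theorem comp (hS : IsShiftBy J v S) (hT : IsShiftBy J w T) (hw : ∀ p ∈ J, p + w ∈ J) :
    IsShiftBy J (w + v) (S ∘L T) := by
  intro p hp hp'
  rw [ContinuousLinearMap.comp_apply, hT p hp (hw p hp), hS _ _ (by rwa [add_assoc])]
  exact e_congr (add_assoc p w v) _ _

theorem adjoint_apply_e_of_sub_mem (hT : IsShiftBy J v T) (hv : ∀ p ∈ J, p + v ∈ J) {q : J}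
    (h : (q : ℤ × ℤ) - v ∈ J) : T.adjoint (e J q) = e J ⟨_, h⟩ := by
  refine ext_inner_e fun p => ?_
  rw [ContinuousLinearMap.adjoint_inner_right, hT p p.2 (hv p p.2), inner_e_e, inner_e_e]
  simp only [Subtype.ext_iff, eq_sub_iff_add_eq]

theorem adjoint_apply_e_of_sub_notMem (hT : IsShiftBy J v T) (hv : ∀ p ∈ J, p + v ∈ J) {q : J}
    (h : (q : ℤ × ℤ) - v ∉ J) : T.adjoint (e J q) = 0 := by
  refine ext_inner_e fun p => ?_
  rw [ContinuousLinearMap.adjoint_inner_right, hT p p.2 (hv p p.2), inner_e_e, inner_zero_right,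
    if_neg]
  rintro rfl
  exact h (by simp)

theorem comp_adjoint_apply_e (hT : IsShiftBy J v T) (hv : ∀ p ∈ J, p + v ∈ J) (q : J) :
    (T ∘L T.adjoint) (e J q) = J.indicator (1 : ℤ × ℤ → ℂ) ((q : ℤ × ℤ) - v) • e J q := by
  rw [ContinuousLinearMap.comp_apply]
  by_cases h : (q : ℤ × ℤ) - v ∈ J
  · rw [hT.adjoint_apply_e_of_sub_mem hv h, hT _ h (by simp), Set.indicator_of_mem h, Pi.one_apply,
      one_smul]
    exact e_congr (sub_add_cancel _ v) _ _
  · rw [hT.adjoint_apply_e_of_sub_notMem hv h, map_zero, Set.indicator_of_notMem h, zero_smul]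

end IsShiftBy

theorem IsShiftW.isShiftBy {J : Set (ℤ × ℤ)} {Mw : HJ J →L[ℂ] HJ J} (hMw : IsShiftW J Mw) :
    IsShiftBy J (1, 0) Mw := fun p hp hp' => by
  have hpv : p + (1, 0) = (p.1 + 1, p.2) := Prod.ext rfl (add_zero _)
  exact (hMw p hp (hpv ▸ hp')).trans (e_congr hpv.symm _ _)

theorem IsShiftZ.isShiftBy {J : Set (ℤ × ℤ)} {Mz : HJ J →L[ℂ] HJ J} (hMz : IsShiftZ J Mz) :
    IsShiftBy J (0, 1) Mz := fun p hp hp' => by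
  have hpv : p + (0, 1) = (p.1, p.2 + 1) := Prod.ext (add_zero _) rfl
  exact (hMz p hp (hpv ▸ hp')).trans (e_congr hpv.symm _ _)

theorem IsDiagram.indicator_defect_eq {R : Type*} [Ring R] {J : Set (ℤ × ℤ)} (hJ : IsDiagram J)
    {q : ℤ × ℤ} (hq : q ∈ J) :
    1 - J.indicator (1 : ℤ × ℤ → R) (q - (1, 0)) - J.indicator 1 (q - (0, 1))
        + J.indicator 1 (q - (1, 1)) =
      (Jouter J).indicator 1 q - (Jinner J).indicator 1 q := by
  classical
  obtain ⟨a, b⟩ := q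
  have hleft : (a - 1, b - 1) ∈ J → (a - 1, b) ∈ J := fun h => by
    simpa using hJ.add_mem h (v := (0, 1)) (by decide)
  have hdown : (a - 1, b - 1) ∈ J → (a, b - 1) ∈ J := fun h => by
    simpa using hJ.add_mem h (v := (1, 0)) (by decide)
  simp only [Set.indicator_apply, Jouter, Jinner, JHB, JVB, Prod.mk_sub_mk, sub_zero,
    Set.mem_inter_iff, Set.mem_ofPred_eq, Pi.one_apply]
  by_cases h1 : (a - 1, b) ∈ J <;> by_cases h2 : (a, b - 1) ∈ J <;>
    by_cases h3 : (a - 1, b - 1) ∈ J <;> simp_all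

/-- The defect operator `I − M_wM_w* − M_zM_z* + M_wM_zM_z*M_w*` of the pair of isometries
defined by a diagram `J` equals `P_outer − P_inner`, where `P_outer`, `P_inner` are the
orthogonal projections onto the closed spans of the basis vectors indexed by the outer,
resp. inner, corners of `J`. -/
theorem stmt4 (J : Set (ℤ × ℤ)) (hJ : IsDiagram J)
    (Mw Mz : HJ J →L[ℂ] HJ J) (hMw : IsShiftW J Mw) (hMz : IsShiftZ J Mz)
    (Pout Pin : HJ J →L[ℂ] HJ J)
    (hPout : ∀ x : HJ J,
      Pout x ∈ (Submodule.span ℂ (basisVecs J (Jouter J))).topologicalClosure ∧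
      x - Pout x ∈ ((Submodule.span ℂ (basisVecs J (Jouter J))).topologicalClosure)ᗮ)
    (hPin : ∀ x : HJ J,
      Pin x ∈ (Submodule.span ℂ (basisVecs J (Jinner J))).topologicalClosure ∧
      x - Pin x ∈ ((Submodule.span ℂ (basisVecs J (Jinner J))).topologicalClosure)ᗮ) :
    (1 : HJ J →L[ℂ] HJ J) - Mw ∘L ContinuousLinearMap.adjoint Mw
        - Mz ∘L ContinuousLinearMap.adjoint Mz
        + Mw ∘L Mz ∘L ContinuousLinearMap.adjoint Mz ∘L ContinuousLinearMap.adjoint Mw =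
      Pout - Pin := by
  have hshift {v : ℤ × ℤ} (hv : 0 ≤ v) : ∀ p ∈ J, p + v ∈ J := fun _ hp => hJ.add_mem hp hv
  have hW := hMw.isShiftBy
  have hZ := hMz.isShiftBy
  have hWZ : IsShiftBy J (1, 1) (Mw ∘L Mz) := hW.comp hZ (hshift (by decide))
  have hadjoint : Mw ∘L Mz ∘L Mz.adjoint ∘L Mw.adjoint = (Mw ∘L Mz) ∘L (Mw ∘L Mz).adjoint := by
    rw [ContinuousLinearMap.adjoint_comp]; rfl
  rw [hadjoint, eq_starProjection_of_forall hPout, eq_starProjection_of_forall hPin]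
  refine continuousLinearMap_ext_e fun q => ?_
  simp only [add_apply, sub_apply, one_apply_eq_self, hW.comp_adjoint_apply_e (hshift (by decide)),
    hZ.comp_adjoint_apply_e (hshift (by decide)), hWZ.comp_adjoint_apply_e (hshift (by decide)),
    starProjection_closure_span_basisVecs_e]
  rw [← sub_smul, ← hJ.indicator_defect_eq q.2]
  module

end TaylorDiagram
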